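/- Let (x, y) be a vertex of the convex hull of feasible solutions of the uniform-capacity CKFL MIP, and let H be the subgraph of G consisting of the 'untight' edges {i,j} with 0 < x_{ij} < s. Then in each connected component of H there is at most one facility i with 0 < ∑_{j∈D} x_{ij} < s. -/

import Mathlib

/-!
Suppose two distinct facilities `i₁, i₂` with load strictly between `0` and `s` are joined by a
walk in `H`. Putting the weights `1, -1, 1, …` on the edges of the walk gives a direction `w`
that keeps every client's total demand, changes the loads of `i₁` and `i₂` only (by `±1`), and
is supported on edges with `x_ij > 0`. Both facilities are open and have slack, so `(x ± ε w, y)`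
is feasible for small `ε > 0`, and `(x, y)` is the midpoint of two distinct feasible points.
-/

open Finset Filter Topology

theorem Sym2.sum_single_mk_of_ne {V R : Type*} [DecidableEq V] [Fintype V] [Semiring R]
    {u w : V} (huw : u ≠ w) (v : V) :
    ∑ x, (Pi.single s(u, w) 1 : Sym2 V → R) s(v, x) =
      (if v = u then 1 else 0) + (if v = w then 1 else 0) := by
  simp only [Pi.single_apply, Sym2.eq_iff]
  by_cases hu : v = u
  · simp [hu, huw]
  · by_cases hw : v = w <;> simp [hu, hw, huw.symm]

namespace SimpleGraph.Walk

variable {V R : Type*} [DecidableEq V] [CommRing R] {G : SimpleGraph V}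

/-- The weights `1, -1, 1, …` on the successive edges of the walk; an edge traversed several
times gets the sum of its weights. -/
def altWeight : {u v : V} → G.Walk u v → Sym2 V → R
  | _, _, nil => 0
  | u, _, cons (v := w) _ q => Pi.single s(u, w) 1 - q.altWeight

theorem mem_edges_of_altWeight_ne_zero {u v : V} (p : G.Walk u v) {e : Sym2 V}
    (he : p.altWeight e ≠ (0 : R)) : e ∈ p.edges := by
  induction p with
  | nil => simp [altWeight] at he
  | @cons u w v _ q ih =>
    rw [edges_cons, List.mem_cons]
    by_cases h : e = s(u, w)
    · exact .inl h
    · refine .inr (ih ?_)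
      simpa [altWeight, Pi.single_apply, h] using he

theorem sum_altWeight_mk [Fintype V] {u v : V} (p : G.Walk u v) (a : V) :
    ∑ x, p.altWeight s(a, x) =
      (if a = u then 1 else 0) - (-1 : R) ^ p.length * (if a = v then 1 else 0) := by
  induction p with
  | nil => simp [altWeight]
  | @cons u w v h q ih =>
    simp only [altWeight, Pi.sub_apply, sum_sub_distrib, ih, Sym2.sum_single_mk_of_ne h.ne,
      length_cons]
    ring

theorem altWeight_eq_zero_of_not_adj {a b u v : V} (p : G.Walk a b) (h : ¬G.Adj u v) :
    p.altWeight s(u, v) = (0 : R) :=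
  by_contra fun hne => h (p.adj_of_mem_edges (p.mem_edges_of_altWeight_ne_zero hne))

variable {ι κ : Type*} [DecidableEq ι] [DecidableEq κ] [Fintype ι] [Fintype κ]
  {H : SimpleGraph (ι ⊕ κ)} {a b : ι ⊕ κ}

theorem sum_inr_altWeight (hH : H ≤ completeBipartiteGraph ι κ) (p : H.Walk a b) (i : ι) :
    ∑ j, p.altWeight s(.inl i, .inr j) = ∑ v, (p.altWeight s(.inl i, v) : R) := by
  have hinl (i' : ι) : p.altWeight s(.inl i, .inl i') = (0 : R) :=
    p.altWeight_eq_zero_of_not_adj fun h ↦ by simpa using hH h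
  simp [Fintype.sum_sum_type, hinl]

theorem sum_inl_altWeight (hH : H ≤ completeBipartiteGraph ι κ) (p : H.Walk a b) (j : κ) :
    ∑ i, p.altWeight s(.inl i, .inr j) = ∑ v, (p.altWeight s(.inr j, v) : R) := by
  have hinr (j' : κ) : p.altWeight s(.inr j, .inr j') = (0 : R) :=
    p.altWeight_eq_zero_of_not_adj fun h ↦ by simpa using hH h
  simp [Fintype.sum_sum_type, hinr, Sym2.eq_swap]

end SimpleGraph.Walk

theorem eq_zero_of_add_mem_of_sub_mem_extremePoints {𝕜 E : Type*} [Field 𝕜] [LinearOrder 𝕜]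
    [IsStrictOrderedRing 𝕜] [AddCommGroup E] [Module 𝕜 E] {A : Set E} {x v : E}
    (hx : x ∈ A.extremePoints 𝕜) (h₁ : x + v ∈ A) (h₂ : x - v ∈ A) : v = 0 :=
  add_eq_left.1 (hx.2 h₁ h₂ (mem_openSegment_add_sub x v))

theorem eventually_forall_mul_abs_le {T : Type*} [Finite T] {c b : T → ℝ} (hb : ∀ t, 0 ≤ b t)
    (hcb : ∀ t, c t ≠ 0 → 0 < b t) : ∀ᶠ ε in 𝓝 (0 : ℝ), ∀ t, ε * |c t| ≤ b t := by
  refine eventually_all.2 fun t ↦ ?_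
  rcases eq_or_ne (c t) 0 with h | h
  · simp [h, hb t]
  · have := (continuous_mul_const |c t|).tendsto' 0 0 (zero_mul _)
    exact (this.eventually (gt_mem_nhds (hcb t h))).mono fun _ ↦ le_of_lt

namespace CKFL

variable {ι κ : Type*} [Fintype ι] [Fintype κ] {s : ℝ} {d : κ → ℝ} {k : ℕ}
  {x w : ι → κ → ℝ} {y : ι → ℝ}

def feasible (s : ℝ) (d : κ → ℝ) (k : ℕ) : Set ((ι → κ → ℝ) × (ι → ℝ)) :=
  {p | (∀ i, p.2 i = 0 ∨ p.2 i = 1) ∧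
    (∑ i, p.2 i) ≤ (k : ℝ) ∧
    (∀ i j, 0 ≤ p.1 i j) ∧
    (∀ j, (∑ i, p.1 i j) = d j) ∧
    (∀ i, (∑ j, p.1 i j) ≤ s * p.2 i)}

theorem sum_lt_of_mem_feasible (hxy : (x, y) ∈ feasible s d k) {i : ι}
    (hi : 0 < ∑ j, x i j ∧ ∑ j, x i j < s) : ∑ j, x i j < s * y i := by
  obtain ⟨hy, -, -, -, hcap⟩ := hxy
  dsimp only at hy hcap
  rcases hy i with hyi | hyi
  · have := hcap i
    simp only [hyi, mul_zero] at this
    linarith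
  · simpa [hyi] using hi.2

theorem add_mem_feasible (hxy : (x, y) ∈ feasible s d k) (hcol : ∀ j, ∑ i, w i j = 0)
    (hw : ∀ i j, |w i j| ≤ x i j) (hrow : ∀ i, ∑ j, x i j + |∑ j, w i j| ≤ s * y i) :
    (x + w, y) ∈ feasible s d k := by
  obtain ⟨hy, hk, -, hd, -⟩ := hxy
  refine ⟨hy, hk, fun i j ↦ ?_, fun j ↦ ?_, fun i ↦ ?_⟩
  · have := neg_le_of_abs_le (hw i j)
    simp only [Pi.add_apply]
    linarith
  · simp [sum_add_distrib, hd, hcol]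
  · have := le_abs_self (∑ j, w i j)
    simp only [Pi.add_apply, sum_add_distrib]
    linarith [hrow i]

theorem eq_zero_of_abs_le_of_mem_extremePoints
    (hxy : (x, y) ∈ (convexHull ℝ (feasible s d k)).extremePoints ℝ)
    (hcol : ∀ j, ∑ i, w i j = 0) (hw : ∀ i j, |w i j| ≤ x i j)
    (hrow : ∀ i, ∑ j, x i j + |∑ j, w i j| ≤ s * y i) : w = 0 := by
  have hmem := extremePoints_convexHull_subset hxy
  have h₁ := add_mem_feasible hmem hcol hw hrow
  have h₂ := add_mem_feasible (w := -w) hmem (by simpa using hcol) (by simpa using hw)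
    (by simpa using hrow)
  have := eq_zero_of_add_mem_of_sub_mem_extremePoints (v := (w, 0)) hxy
    (by simpa using subset_convexHull ℝ _ h₁)
    (by simpa [sub_eq_add_neg] using subset_convexHull ℝ _ h₂)
  exact (Prod.ext_iff.1 this).1

theorem eq_zero_of_mem_extremePoints
    (hxy : (x, y) ∈ (convexHull ℝ (feasible s d k)).extremePoints ℝ)
    (hcol : ∀ j, ∑ i, w i j = 0) (hsupp : ∀ i j, w i j ≠ 0 → 0 < x i j)
    (hslack : ∀ i, ∑ j, w i j ≠ 0 → ∑ j, x i j < s * y i) : w = 0 := by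
  obtain ⟨-, -, hx, -, hcap⟩ := extremePoints_convexHull_subset hxy
  have hsmall : ∀ᶠ ε in 𝓝 (0 : ℝ), (∀ q : ι × κ, ε * |w q.1 q.2| ≤ x q.1 q.2) ∧
      ∀ i, ε * |∑ j, w i j| ≤ s * y i - ∑ j, x i j :=
    (eventually_forall_mul_abs_le (fun q : ι × κ ↦ hx q.1 q.2) fun q ↦ hsupp q.1 q.2).and
      (eventually_forall_mul_abs_le (fun i ↦ sub_nonneg.2 (hcap i)) fun i hi ↦
        sub_pos.2 (hslack i hi))
  obtain ⟨ε, ⟨hεx, hεcap⟩, hε⟩ :=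
    ((hsmall.filter_mono nhdsWithin_le_nhds).and self_mem_nhdsWithin).exists (f := 𝓝[>] 0)
  have hεw : ε • w = 0 := eq_zero_of_abs_le_of_mem_extremePoints hxy
    (fun j ↦ by simp [← mul_sum, hcol])
    (fun i j ↦ by simpa [abs_mul, abs_of_pos hε] using hεx (i, j))
    (fun i ↦ by
      have := hεcap i
      simp only [Pi.smul_apply, smul_eq_mul, ← mul_sum, abs_mul, abs_of_pos hε]
      linarith)
  exact (smul_eq_zero.1 hεw).resolve_left hε.ne'

end CKFL

open SimpleGraph.Walk in
theorem stmt_8_general {ι κ : Type*} [Fintype ι] [Fintype κ]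
    (s : ℝ) (d : κ → ℝ) (k : ℕ)
    (S : Set ((ι → κ → ℝ) × (ι → ℝ)))
    (hS : S = {p | (∀ i, p.2 i = 0 ∨ p.2 i = 1) ∧
      (∑ i, p.2 i) ≤ (k : ℝ) ∧
      (∀ i j, 0 ≤ p.1 i j) ∧
      (∀ j, (∑ i, p.1 i j) = d j) ∧
      (∀ i, (∑ j, p.1 i j) ≤ s * p.2 i)})
    (x : ι → κ → ℝ) (y : ι → ℝ)
    (hvx : (x, y) ∈ (convexHull ℝ S).extremePoints ℝ)
    (H : SimpleGraph (ι ⊕ κ))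
    (hH : H = SimpleGraph.fromRel fun a b =>
      ∃ i j, a = Sum.inl i ∧ b = Sum.inr j ∧ 0 < x i j ∧ x i j < s)
    (i₁ i₂ : ι)
    (h₁ : 0 < (∑ j, x i₁ j) ∧ (∑ j, x i₁ j) < s)
    (h₂ : 0 < (∑ j, x i₂ j) ∧ (∑ j, x i₂ j) < s)
    (hreach : H.Reachable (Sum.inl i₁) (Sum.inl i₂)) :
    i₁ = i₂ := by
  classical
  subst hS hH
  by_contra hne
  obtain ⟨p⟩ := hreach
  have hbip : SimpleGraph.fromRel (fun a b ↦
      ∃ i j, a = .inl i ∧ b = .inr j ∧ 0 < x i j ∧ x i j < s) ≤ completeBipartiteGraph ι κ := by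
    rintro a b ⟨-, ⟨i, j, rfl, rfl, -⟩ | ⟨i, j, rfl, rfl, -⟩⟩ <;> simp
  set w : ι → κ → ℝ := fun i j ↦ p.altWeight s(.inl i, .inr j)
  have hrow (i : ι) : ∑ j, w i j =
      (if i = i₁ then 1 else 0) - (-1) ^ p.length * (if i = i₂ then 1 else 0) := by
    simp [w, sum_inr_altWeight hbip, sum_altWeight_mk]
  have hw : w = 0 := by
    refine CKFL.eq_zero_of_mem_extremePoints hvx (fun j ↦ ?_) (fun i j hij ↦ ?_) fun i hi ↦ ?_
    · simp [w, sum_inl_altWeight hbip, sum_altWeight_mk]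
    · obtain ⟨-, ⟨_, _, ⟨⟩, ⟨⟩, hpos, -⟩ | ⟨_, _, ⟨⟩, -⟩⟩ :=
        p.adj_of_mem_edges (p.mem_edges_of_altWeight_ne_zero hij)
      exact hpos
    · have hxy := extremePoints_convexHull_subset hvx
      by_cases hi₁ : i = i₁
      · exact CKFL.sum_lt_of_mem_feasible hxy (hi₁ ▸ h₁)
      by_cases hi₂ : i = i₂
      · exact CKFL.sum_lt_of_mem_feasible hxy (hi₂ ▸ h₂)
      simp [hrow, hi₁, hi₂] at hi
  simpa [hrow, hne] using congrArg (fun z ↦ ∑ j, z i₁ j) hw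

/-- At a vertex of the convex hull of feasible solutions of the
uniform-capacity CKFL MIP, each connected component of the untight subgraph H
contains at most one facility serving strictly between 0 and s units. -/
theorem stmt_8 {ι κ : Type*} [Fintype ι] [Fintype κ]
    (s : ℝ) (hs : 0 < s) (d : κ → ℝ) (k : ℕ)
    (S : Set ((ι → κ → ℝ) × (ι → ℝ)))
    (hS : S = {p | (∀ i, p.2 i = 0 ∨ p.2 i = 1) ∧
      (∑ i, p.2 i) ≤ (k : ℝ) ∧
      (∀ i j, 0 ≤ p.1 i j) ∧
      (∀ j, (∑ i, p.1 i j) = d j) ∧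
      (∀ i, (∑ j, p.1 i j) ≤ s * p.2 i)})
    (x : ι → κ → ℝ) (y : ι → ℝ)
    (hvx : (x, y) ∈ (convexHull ℝ S).extremePoints ℝ)
    (H : SimpleGraph (ι ⊕ κ))
    (hH : H = SimpleGraph.fromRel fun a b =>
      ∃ i j, a = Sum.inl i ∧ b = Sum.inr j ∧ 0 < x i j ∧ x i j < s)
    (i₁ i₂ : ι)
    (h₁ : 0 < (∑ j, x i₁ j) ∧ (∑ j, x i₁ j) < s)
    (h₂ : 0 < (∑ j, x i₂ j) ∧ (∑ j, x i₂ j) < s)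
    (hreach : H.Reachable (Sum.inl i₁) (Sum.inl i₂)) :
    i₁ = i₂ :=
  stmt_8_general s d k S hS x y hvx H hH i₁ i₂ h₁ h₂ hreach
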